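/- arXiv:0908.4467 — 2 statements merged into one kernel-verified Lean document; each statement's English description precedes it below -/
import Mathlib

section
/- Let A be an n×n matrix satisfying a_{ij} + a_{ji} - a_{ii} - a_{jj} = (γ/2)(σ_i² + σ_j²) for all i ≠ j with γ ≠ 0 and all σ_i > 0. Then there is at most one vector α ∈ R^n with α₁ + ... + αₙ = γ such that (Ãα)₁ = ... = (Ãα)ₙ, where ã_{ij} = a_{ij} - σ_i²/2. -/
/-!
Put `β = α - α'`. Then `∑ βᵢ = 0` and `Ãβ` is a constant vector, so `βᵀÃβ = 0`. On the other
hand the hypothesis on `A` (which `Ã` inherits, since `Ã - A` has constant rows) says that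
`Ã + Ãᵀ = u 1ᵀ + 1 uᵀ - γ diag(σ²)` for some vector `u`; the rank-one parts vanish on `β`, so
`2 βᵀÃβ = -γ ∑ σᵢ² βᵢ²`. As `γ ≠ 0` and `σᵢ > 0`, this forces `β = 0`.
-/

open Matrix Finset

namespace Matrix

variable {ι R : Type*} [CommRing R]

theorem add_transpose_eq_of_offDiag [DecidableEq ι] {M : Matrix ι ι R} {e : ι → R}
    (hM : ∀ i j, i ≠ j → M i j + M j i - M i i - M j j = e i + e j) :
    M + Mᵀ = vecMulVec (diag M + e) 1 + vecMulVec 1 (diag M + e) - (2 : R) • diagonal e := by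
  ext i j
  rcases eq_or_ne i j with rfl | hij
  · simp only [add_apply, transpose_apply, sub_apply, vecMulVec_apply, smul_apply,
      diagonal_apply_eq, diag_apply, Pi.add_apply, Pi.one_apply, smul_eq_mul]
    ring
  · simp only [add_apply, transpose_apply, sub_apply, vecMulVec_apply, smul_apply,
      diagonal_apply_ne _ hij, diag_apply, Pi.add_apply, Pi.one_apply, smul_eq_mul]
    linear_combination hM i j hij

variable [Fintype ι]

theorem dotProduct_mulVec_eq_zero_of_sum_eq_zero {M : Matrix ι ι R} {β : ι → R}
    (hconst : ∀ i j, (M *ᵥ β) i = (M *ᵥ β) j) (hβ : ∑ i, β i = 0) : β ⬝ᵥ M *ᵥ β = 0 := by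
  rcases isEmpty_or_nonempty ι with hι | ⟨⟨i₀⟩⟩
  · simp [dotProduct]
  · simp only [dotProduct, hconst _ i₀, ← sum_mul, hβ, zero_mul]

theorem dotProduct_add_transpose_mulVec (M : Matrix ι ι R) (β : ι → R) :
    β ⬝ᵥ (M + Mᵀ) *ᵥ β = 2 * (β ⬝ᵥ M *ᵥ β) := by
  rw [add_mulVec, dotProduct_add, dotProduct_transpose_mulVec]
  ring

theorem dotProduct_diagonal_mulVec [DecidableEq ι] (e β : ι → R) :
    β ⬝ᵥ diagonal e *ᵥ β = ∑ i, e i * β i ^ 2 := by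
  simp only [dotProduct, mulVec_diagonal]
  exact sum_congr rfl fun i _ => by ring

theorem dotProduct_add_transpose_mulVec_of_sum_eq_zero [DecidableEq ι] {M : Matrix ι ι R}
    {e β : ι → R} (hM : ∀ i j, i ≠ j → M i j + M j i - M i i - M j j = e i + e j)
    (hβ : ∑ i, β i = 0) : β ⬝ᵥ (M + Mᵀ) *ᵥ β = -2 * ∑ i, e i * β i ^ 2 := by
  have h1 : β ⬝ᵥ 1 = 0 := by rw [dotProduct_one, hβ]
  have h1' : 1 ⬝ᵥ β = 0 := by rw [dotProduct_comm, h1]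
  rw [add_transpose_eq_of_offDiag hM, sub_mulVec, add_mulVec, vecMulVec_mulVec,
    vecMulVec_mulVec, h1', smul_mulVec, dotProduct_sub, dotProduct_add]
  simp only [MulOpposite.op_zero, zero_smul, dotProduct_zero, op_smul_eq_smul, dotProduct_smul,
    dotProduct_diagonal_mulVec, h1, smul_eq_mul, mul_zero, add_zero, zero_sub, neg_mul]

end Matrix

theorem eq_zero_of_sum_mul_sq_eq_zero {ι R : Type*} [Fintype ι] [CommRing R] [LinearOrder R]
    [IsStrictOrderedRing R] {w β : ι → R} (hw : ∀ i, 0 < w i) (h : ∑ i, w i * β i ^ 2 = 0) :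
    β = 0 := by
  have hterm := (sum_eq_zero_iff_of_nonneg fun i _ => by have := hw i; positivity).mp h
  funext i
  simpa [(hw i).ne'] using hterm i (mem_univ i)

theorem stmt_11 (n : ℕ) (A : Matrix (Fin n) (Fin n) ℝ) (σ : Fin n → ℝ) (γ : ℝ)
    (hσ : ∀ i, 0 < σ i) (hγ : γ ≠ 0)
    (hA : ∀ i j, i ≠ j → A i j + A j i - A i i - A j j = γ / 2 * (σ i ^ 2 + σ j ^ 2))
    (Atil : Matrix (Fin n) (Fin n) ℝ) (hAt : ∀ i j, Atil i j = A i j - σ i ^ 2 / 2)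
    (α α' : Fin n → ℝ) (hs : ∑ i, α i = γ) (hs' : ∑ i, α' i = γ)
    (he : ∀ i j, Atil.mulVec α i = Atil.mulVec α j)
    (he' : ∀ i j, Atil.mulVec α' i = Atil.mulVec α' j) :
    α = α' := by
  set β := α - α'
  have hβsum : ∑ i, β i = 0 := by simp [β, sum_sub_distrib, hs, hs']
  have hβconst : ∀ i j, (Atil *ᵥ β) i = (Atil *ᵥ β) j := fun i j => by
    simp only [β, mulVec_sub, Pi.sub_apply, he i j, he' i j]
  have hAtil : ∀ i j, i ≠ j → Atil i j + Atil j i - Atil i i - Atil j j =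
      γ / 2 * σ i ^ 2 + γ / 2 * σ j ^ 2 := fun i j hij => by
    simp only [hAt]
    linear_combination hA i j hij
  have hquad := dotProduct_add_transpose_mulVec_of_sum_eq_zero hAtil hβsum
  rw [dotProduct_add_transpose_mulVec,
    dotProduct_mulVec_eq_zero_of_sum_eq_zero hβconst hβsum] at hquad
  simp only [mul_assoc, ← mul_sum] at hquad
  have hweighted : ∑ i, σ i ^ 2 * β i ^ 2 = 0 :=
    (mul_eq_zero.mp (by linear_combination hquad)).resolve_left hγ
  exact sub_eq_zero.mp (eq_zero_of_sum_mul_sq_eq_zero (fun i => pow_pos (hσ i) 2) hweighted)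
end

section
/- Let A satisfy a_{ij} + a_{ji} = a_{ii} + a_{jj} for all i,j, and let β ∈ R^n satisfy Σβ_i = 0, all coordinates of Ãβ equal, and βᵀÃ ≠ 0 (where ã_{ij} = a_{ij} - σ_i²/2, σ_i > 0). Set c = 2(βᵀÃ)₁ / (Σ_i σ_i² β_i²) and α_i = cβ_i. Then c ≠ 0 and Σ_i ã_{ii} α_i - (1/2) Σ_i σ_i² α_i² = (Ãα)₁. -/
/-!
Writing `Ã` for the shifted matrix, the condition `a_ij + a_ji = a_ii + a_jj` survives the
row shift by `σ_i²/2`, and together with `∑ β_i = 0` it gives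
`(βᵀÃ)_j = ∑_i β_i ã_ii - (Ãβ)_j`. Since `Ãβ` is a constant vector, so is `βᵀÃ`; being nonzero,
its first entry is nonzero, hence so is `c`. The choice of `c` makes `(c²/2) ∑ σ_i² β_i² = c (βᵀÃ)₁`,
and the same formula at `j = 1` turns the claimed identity into `c ∑ β_i ã_ii - c (βᵀÃ)₁ = c (Ãβ)₁`.
-/

open Matrix Finset

variable {ι R : Type*}

def IsDiagSumSymmetric [Add R] (M : Matrix ι ι R) : Prop :=
  ∀ i j, M i j + M j i = M i i + M j j

namespace IsDiagSumSymmetric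

theorem sub_row [AddCommGroup R] {M : Matrix ι ι R} (hM : IsDiagSumSymmetric M) (s : ι → R) :
    IsDiagSumSymmetric (Matrix.of fun i j => M i j - s i) := by
  intro i j
  calc M i j - s i + (M j i - s j) = (M i j + M j i) - (s i + s j) := by abel
    _ = M i i - s i + (M j j - s j) := by rw [hM i j]; abel

variable [Fintype ι]

theorem vecMul_apply [CommRing R] {M : Matrix ι ι R} (hM : IsDiagSumSymmetric M)
    {β : ι → R} (hβ : ∑ i, β i = 0) (j : ι) :
    (β ᵥ* M) j = ∑ i, β i * M i i - (M *ᵥ β) j := by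
  have hcol : ∀ i, β i * M i j = β i * M i i + M j j * β i - M j i * β i := fun i => by
    linear_combination β i * hM i j
  simp only [vecMul, mulVec, dotProduct, hcol, sum_sub_distrib, sum_add_distrib, ← mul_sum, hβ]
  ring

theorem vecMul_eq_const [CommRing R] {M : Matrix ι ι R} (hM : IsDiagSumSymmetric M)
    {β : ι → R} (hβ : ∑ i, β i = 0) (he : ∀ i j, (M *ᵥ β) i = (M *ᵥ β) j) (i₀ : ι) :
    β ᵥ* M = fun _ => (β ᵥ* M) i₀ := by
  ext j
  rw [hM.vecMul_apply hβ, hM.vecMul_apply hβ, he j i₀]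

theorem sum_diag_mul_sub_half_sum_mul_sq {M : Matrix ι ι ℝ} (hM : IsDiagSumSymmetric M)
    {β : ι → ℝ} (hβ : ∑ i, β i = 0) (w : ι → ℝ) (i₀ : ι) {c : ℝ}
    (hc : c * ∑ i, w i * β i ^ 2 = 2 * (β ᵥ* M) i₀) :
    ∑ i, M i i * (c * β i) - 1 / 2 * ∑ i, w i * (c * β i) ^ 2 = (M *ᵥ (c • β)) i₀ := by
  have hquad : ∑ i, w i * (c * β i) ^ 2 = c * (c * ∑ i, w i * β i ^ 2) := by
    simp only [mul_sum]
    exact sum_congr rfl fun i _ => by ring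
  have hlin : ∑ i, M i i * (c * β i) = c * ∑ i, β i * M i i := by
    simp only [mul_sum]
    exact sum_congr rfl fun i _ => by ring
  rw [hquad, hlin, hc, mulVec_smul, Pi.smul_apply, smul_eq_mul, hM.vecMul_apply hβ i₀]
  ring

end IsDiagSumSymmetric

theorem sum_mul_sq_pos [Fintype ι] {w β : ι → ℝ} (hw : ∀ i, 0 < w i) (hβ : β ≠ 0) :
    0 < ∑ i, w i * β i ^ 2 := by
  obtain ⟨k, hk⟩ := Function.ne_iff.mp hβ
  exact sum_pos' (fun i _ => mul_nonneg (hw i).le (sq_nonneg _))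
    ⟨k, mem_univ k, mul_pos (hw k) (sq_pos_of_ne_zero hk)⟩

theorem stmt_14 (n : ℕ) (A : Matrix (Fin (n + 1)) (Fin (n + 1)) ℝ)
    (σ : Fin (n + 1) → ℝ) (hσ : ∀ i, 0 < σ i)
    (hA : ∀ i j, A i j + A j i = A i i + A j j)
    (Atil : Matrix (Fin (n + 1)) (Fin (n + 1)) ℝ)
    (hAt : ∀ i j, Atil i j = A i j - σ i ^ 2 / 2)
    (β : Fin (n + 1) → ℝ) (hβ : ∑ i, β i = 0)
    (he : ∀ i j, Atil.mulVec β i = Atil.mulVec β j)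
    (hne : β ᵥ* Atil ≠ 0)
    (c : ℝ) (hc : c = 2 * (β ᵥ* Atil) 0 / ∑ i, σ i ^ 2 * β i ^ 2)
    (α : Fin (n + 1) → ℝ) (hα : ∀ i, α i = c * β i) :
    c ≠ 0 ∧
    ∑ i, Atil i i * α i - (1 / 2) * ∑ i, σ i ^ 2 * α i ^ 2 = Atil.mulVec α 0 := by
  have hM : IsDiagSumSymmetric Atil := by
    have : Atil = Matrix.of fun i j => A i j - σ i ^ 2 / 2 := Matrix.ext hAt
    exact this ▸ IsDiagSumSymmetric.sub_row hA _
  have hK : (β ᵥ* Atil) 0 ≠ 0 := fun h0 =>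
    hne (by rw [hM.vecMul_eq_const hβ he 0, h0]; rfl)
  have hS : 0 < ∑ i, σ i ^ 2 * β i ^ 2 :=
    sum_mul_sq_pos (fun i => pow_pos (hσ i) 2) (fun h => hne (by rw [h, zero_vecMul]))
  obtain rfl : α = c • β := funext fun i => hα i
  refine ⟨hc ▸ div_ne_zero (mul_ne_zero two_ne_zero hK) hS.ne', ?_⟩
  exact hM.sum_diag_mul_sub_half_sum_mul_sq hβ _ 0 (by rw [hc]; field_simp)
end
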